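/- (Deterministic perturbation bound) Let E be a real Hilbert space, K ⊆ E nonempty closed convex, Φ : E → E M-strongly monotone and L-Lipschitz on K with 0 < M, 0 < L, 0 < ε < 2M/L², and let x* ∈ K be the fixed point of x ↦ proj_K(x − εΦ(x)). Let Φ̃ : E → E satisfy the uniform bound ‖Φ̃(x) − Φ(x)‖ ≤ δ for all x ∈ K. Then the perturbed iteration x^{k+1} = proj_K(x^k − εΦ̃(x^k)), x⁰ ∈ K, satisfies lim sup_{k→∞} ‖x^k − x*‖ ≤ εδ / (1 − √(1 − 2εM + ε²L²)). -/
import Mathlib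


open scoped RealInnerProductSpace

/-- `P` is the metric projection onto the nonempty closed convex set `K`:
for every `u`, `P u ∈ K` and `⟪u - P u, x - P u⟫ ≤ 0` for all `x ∈ K`. -/
def IsMetricProjection {E : Type*} [NormedAddCommGroup E] [InnerProductSpace ℝ E]
    (K : Set E) (P : E → E) : Prop :=
  ∀ u : E, P u ∈ K ∧ ∀ x ∈ K, ⟪u - P u, x - P u⟫ ≤ 0

lemma metricProjection_nonexpansive {E : Type*} [NormedAddCommGroup E] [InnerProductSpace ℝ E]
    {K : Set E} {P : E → E} (hP : IsMetricProjection K P) (u v : E) :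
    ‖P u - P v‖ ≤ ‖u - v‖ := by
  obtain ⟨huK, hu⟩ := hP u
  obtain ⟨hvK, hv⟩ := hP v
  have h1 := hu (P v) hvK
  have h2 := hv (P u) huK
  have key : ‖P u - P v‖ ^ 2 ≤ ⟪u - v, P u - P v⟫ := by
    have h2' : ⟪v - P v, P u - P v⟫ = -⟪v - P v, P v - P u⟫ := by
      rw [show P u - P v = -(P v - P u) by abel, inner_neg_right]
    have h3 : ⟪(u - P u) - (v - P v), P v - P u⟫ ≤ 0 := by
      rw [inner_sub_left]; linarith
    have h4 : ⟪(u - v) - (P u - P v), P v - P u⟫ ≤ 0 := by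
      rw [show (u - v) - (P u - P v) = (u - P u) - (v - P v) by abel]; exact h3
    rw [inner_sub_left] at h4
    have h5 : ⟪P u - P v, P v - P u⟫ = -(‖P u - P v‖ ^ 2) := by
      rw [show P v - P u = -(P u - P v) by abel, inner_neg_right, real_inner_self_eq_norm_sq]
    have h6 : ⟪u - v, P v - P u⟫ = -⟪u - v, P u - P v⟫ := by
      rw [show P v - P u = -(P u - P v) by abel, inner_neg_right]
    linarith
  have hcs : ⟪u - v, P u - P v⟫ ≤ ‖u - v‖ * ‖P u - P v‖ := real_inner_le_norm _ _
  nlinarith [norm_nonneg (P u - P v), norm_nonneg (u - v)]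

/-- Deterministic perturbation bound: if `‖Φ̃(x) - Φ(x)‖ ≤ δ` on `K`, then the perturbed
iteration `x^{k+1} = proj_K(x^k - εΦ̃(x^k))` satisfies
`lim sup_{k→∞} ‖x^k - x*‖ ≤ εδ / (1 - √(1 - 2εM + ε²L²))`. -/
theorem perturbed_projected_gradient_limsup_bound
    {E : Type*} [NormedAddCommGroup E] [InnerProductSpace ℝ E] [CompleteSpace E]
    (K : Set E) (hne : K.Nonempty) (hcl : IsClosed K) (hconv : Convex ℝ K)
    (P : E → E) (hP : IsMetricProjection K P)
    (Φ : E → E) (M L ε : ℝ) (hM : 0 < M) (hL : 0 < L)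
    (hmono : ∀ x ∈ K, ∀ y ∈ K, M * ‖x - y‖ ^ 2 ≤ ⟪Φ x - Φ y, x - y⟫)
    (hlip : ∀ x ∈ K, ∀ y ∈ K, ‖Φ x - Φ y‖ ≤ L * ‖x - y‖)
    (hε0 : 0 < ε) (hε : ε < 2 * M / L ^ 2)
    (xs : E) (hxsK : xs ∈ K) (hxs : P (xs - ε • Φ xs) = xs)
    (Φt : E → E) (δ : ℝ) (hδ : ∀ x ∈ K, ‖Φt x - Φ x‖ ≤ δ)
    (x : ℕ → E) (hx0 : x 0 ∈ K)
    (hiter : ∀ k : ℕ, x (k + 1) = P (x k - ε • Φt (x k))) :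
    Filter.limsup (fun k : ℕ => ‖x k - xs‖) Filter.atTop ≤
      ε * δ / (1 - Real.sqrt (1 - 2 * ε * M + ε ^ 2 * L ^ 2)) := by
  set c : ℝ := 1 - 2 * ε * M + ε ^ 2 * L ^ 2 with hc
  set q : ℝ := Real.sqrt c with hqdef
  have hq0 : 0 ≤ q := Real.sqrt_nonneg c
  have hc1 : c < 1 := by
    have hεL : ε * L ^ 2 < 2 * M := by
      rw [lt_div_iff₀ (by positivity)] at hε
      linarith
    have : ε ^ 2 * L ^ 2 < 2 * ε * M := by nlinarith
    simp only [hc]; linarith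
  have hq1 : q < 1 := by
    rw [hqdef]
    exact (Real.sqrt_lt' one_pos).mpr (by rw [one_pow]; exact hc1)
  have hδ0 : 0 ≤ δ := le_trans (norm_nonneg _) (hδ (x 0) hx0)
  set D : ℝ := ε * δ / (1 - q) with hD
  have h1q : 0 < 1 - q := by linarith
  have hD0 : 0 ≤ D := by positivity
  -- membership
  have hKmem : ∀ k, x k ∈ K := by
    intro k
    cases k with
    | zero => exact hx0
    | succ n => rw [hiter n]; exact (hP _).1
  -- contraction estimate for the exact map
  have hcontr : ∀ a ∈ K, ∀ b ∈ K,
      ‖(a - ε • Φ a) - (b - ε • Φ b)‖ ≤ q * ‖a - b‖ := by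
    intro a ha b hb
    have hvec : (a - ε • Φ a) - (b - ε • Φ b) = (a - b) - ε • (Φ a - Φ b) := by
      rw [smul_sub]; abel
    have hsq : ‖(a - b) - ε • (Φ a - Φ b)‖ ^ 2 ≤ c * ‖a - b‖ ^ 2 := by
      have hexp := norm_sub_sq_real (a - b) (ε • (Φ a - Φ b))
      rw [real_inner_smul_right, norm_smul, Real.norm_eq_abs, abs_of_pos hε0] at hexp
      have hm := hmono a ha b hb
      have hl := hlip a ha b hb
      have hl2 : ‖Φ a - Φ b‖ ^ 2 ≤ L ^ 2 * ‖a - b‖ ^ 2 := by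
        nlinarith [norm_nonneg (Φ a - Φ b), norm_nonneg (a - b)]
      have hcomm : ⟪a - b, Φ a - Φ b⟫ = ⟪Φ a - Φ b, a - b⟫ := real_inner_comm _ _
      rw [hexp, hcomm, hc]
      nlinarith [norm_nonneg (a - b)]
    rw [hvec]
    calc ‖(a - b) - ε • (Φ a - Φ b)‖
        = Real.sqrt (‖(a - b) - ε • (Φ a - Φ b)‖ ^ 2) := (Real.sqrt_sq (norm_nonneg _)).symm
      _ ≤ Real.sqrt (c * ‖a - b‖ ^ 2) := Real.sqrt_le_sqrt hsq
      _ = q * ‖a - b‖ := by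
          rw [Real.sqrt_mul' c (sq_nonneg _), Real.sqrt_sq (norm_nonneg _)]
  -- one-step estimate
  have hstep : ∀ k, ‖x (k + 1) - xs‖ ≤ q * ‖x k - xs‖ + ε * δ := by
    intro k
    rw [hiter k]
    calc ‖P (x k - ε • Φt (x k)) - xs‖
        = ‖P (x k - ε • Φt (x k)) - P (xs - ε • Φ xs)‖ := by rw [hxs]
      _ ≤ ‖(x k - ε • Φt (x k)) - (xs - ε • Φ xs)‖ :=
          metricProjection_nonexpansive hP _ _
      _ = ‖((x k - ε • Φ (x k)) - (xs - ε • Φ xs)) - ε • (Φt (x k) - Φ (x k))‖ := by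
          congr 1; rw [smul_sub]; abel
      _ ≤ ‖(x k - ε • Φ (x k)) - (xs - ε • Φ xs)‖ + ‖ε • (Φt (x k) - Φ (x k))‖ :=
          norm_sub_le _ _
      _ ≤ q * ‖x k - xs‖ + ε * δ := by
          gcongr ?_ + ?_
          · exact hcontr _ (hKmem k) _ hxsK
          · rw [norm_smul, Real.norm_eq_abs, abs_of_pos hε0]
            exact mul_le_mul_of_nonneg_left (hδ _ (hKmem k)) hε0.le
  -- geometric bound
  have hbound : ∀ k, ‖x k - xs‖ ≤ q ^ k * ‖x 0 - xs‖ + D := by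
    intro k
    induction k with
    | zero => simp; linarith
    | succ n ih =>
      have hDq : q * D + ε * δ = D := by
        rw [hD]; field_simp; ring
      calc ‖x (n + 1) - xs‖ ≤ q * ‖x n - xs‖ + ε * δ := hstep n
        _ ≤ q * (q ^ n * ‖x 0 - xs‖ + D) + ε * δ := by
            gcongr
        _ = q ^ (n + 1) * ‖x 0 - xs‖ + (q * D + ε * δ) := by ring
        _ = q ^ (n + 1) * ‖x 0 - xs‖ + D := by rw [hDq]
  -- limsup
  have htend : Filter.Tendsto (fun k : ℕ => q ^ k * ‖x 0 - xs‖ + D) Filter.atTop (nhds D) := by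
    have h0 : Filter.Tendsto (fun k : ℕ => q ^ k * ‖x 0 - xs‖ + D) Filter.atTop
        (nhds (0 * ‖x 0 - xs‖ + D)) :=
      (((tendsto_pow_atTop_nhds_zero_of_lt_one hq0 hq1).mul_const _).add_const D)
    simpa using h0
  have hbdd : Filter.IsBoundedUnder (· ≤ ·) Filter.atTop
      (fun k : ℕ => q ^ k * ‖x 0 - xs‖ + D) := htend.isBoundedUnder_le
  have hcob : Filter.IsCoboundedUnder (· ≤ ·) Filter.atTop (fun k : ℕ => ‖x k - xs‖) :=
    Filter.IsBoundedUnder.isCoboundedUnder_le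
      ⟨0, Filter.eventually_map.2 (Filter.Eventually.of_forall fun k => norm_nonneg _)⟩
  have hle := Filter.limsup_le_limsup (Filter.Eventually.of_forall hbound) hcob hbdd
  rw [htend.limsup_eq] at hle
  exact hle
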